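/- For every integer k ≥ 1, the identity U_{2k}(x/2) · Σ_{n≥0} |A_{2n}^{(k)}| x^{2n+1} = (−1)^k x holds in ℚ⟦x⟧, where |A_0^{(k)}| = 1. -/

import Mathlib

/-- Number of alternating sequences of length `n` bounded by `k`
(with `altCount k 0 = 1`, counting the empty sequence). -/
noncomputable def altCount (k n : ℕ) : ℕ :=
  Nat.card {a : Fin n → ℤ //
    (∀ i, 1 ≤ a i ∧ a i ≤ k) ∧
    (∀ (i : ℕ) (h : i + 1 < n),
      if i % 2 = 0 then a ⟨i, Nat.lt_of_succ_lt h⟩ ≤ a ⟨i + 1, h⟩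
      else a ⟨i + 1, h⟩ ≤ a ⟨i, Nat.lt_of_succ_lt h⟩)}

/-- `U2 m` is the polynomial `U_m(x/2)`, where `U_m` is the `m`-th Chebyshev
polynomial of the second kind (indexed over `ℤ`). -/
noncomputable def U2 (m : ℤ) : Polynomial ℚ :=
  (Polynomial.Chebyshev.U ℚ m).comp (Polynomial.C (1/2 : ℚ) * Polynomial.X)

namespace S4
def Cond (k n : ℕ) (a : Fin n → ℤ) : Prop :=
  (∀ i, 1 ≤ a i ∧ a i ≤ k) ∧
  (∀ (i : ℕ) (h : i + 1 < n),
    if i % 2 = 0 then a ⟨i, Nat.lt_of_succ_lt h⟩ ≤ a ⟨i + 1, h⟩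
    else a ⟨i + 1, h⟩ ≤ a ⟨i, Nat.lt_of_succ_lt h⟩)
lemma finite_aux (k n : ℕ) (P : (Fin n → ℤ) → Prop)
    (hP : ∀ a, P a → ∀ i, 1 ≤ a i ∧ a i ≤ (k:ℤ)) : Finite {a // P a} := by
  have h1 : (Set.Icc (1:ℤ) k).Finite := Set.finite_Icc _ _
  have : Finite (Set.Icc (1:ℤ) k) := h1
  refine Finite.of_injective
    (fun a => fun i => (⟨a.1 i, (hP a.1 a.2 i).1, (hP a.1 a.2 i).2⟩ : Set.Icc (1:ℤ) k)) ?_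
  intro a b hab
  ext i
  exact congrArg Subtype.val (congrFun hab i)
instance inst1 (k n : ℕ) : Finite {a : Fin n → ℤ // Cond k n a} :=
  finite_aux k n _ (fun a ha => ha.1)
instance inst2 (k n : ℕ) (j : ℤ) :
    Finite {a : Fin (n+1) → ℤ // Cond k (n+1) a ∧ a (Fin.last n) = j} :=
  finite_aux k (n+1) _ (fun a ha => ha.1.1)
lemma F1 (k : ℕ) : Nat.card {a : Fin 0 → ℤ // Cond k 0 a} = 1 := by
  have : Unique {a : Fin 0 → ℤ // Cond k 0 a} := by
    refine ⟨⟨⟨fun i => i.elim0, ⟨fun i => i.elim0, fun i h => by omega⟩⟩⟩, ?_⟩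
    rintro ⟨a, ha⟩
    exact Subtype.ext (funext fun i => i.elim0)
  simp [Nat.card_unique]

lemma cardIcc (j : ℤ) : Nat.card {u : ℤ // 1 ≤ u ∧ u ≤ j} = j.toNat := by
  rw [Nat.card_congr (Equiv.subtypeEquivRight (q := fun u => u ∈ Set.Icc 1 j) (by simp))]
  rw [Nat.card_coe_set_eq, Set.ncard_eq_toFinset_card', Set.toFinset_Icc, Int.card_Icc]
  omega
lemma cardIcc2 (j v : ℤ) : Nat.card {u : ℤ // 1 ≤ u ∧ u ≤ j ∧ u ≤ v} = (min j v).toNat := by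
  rw [Nat.card_congr (Equiv.subtypeEquivRight (q := fun u => u ∈ Set.Icc 1 (min j v))
    (by intro u; simp [le_min_iff, and_assoc]))]
  rw [Nat.card_coe_set_eq, Set.ncard_eq_toFinset_card', Set.toFinset_Icc, Int.card_Icc]
  omega
lemma sum_card_fibers {T : Type*} [Fintype T] (f : T → ℤ) (s : Finset ℤ)
    (h : ∀ t, f t ∈ s) (c : ℤ → ℕ) :
    ∑ t : T, c (f t) = ∑ j ∈ s, c j * Nat.card {t : T // f t = j} := by
  classical
  rw [← Finset.sum_fiberwise_of_maps_to (fun t _ => h t) (fun t => c (f t))]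
  refine Finset.sum_congr rfl fun j hj => ?_
  rw [Finset.sum_congr rfl (fun t ht => by rw [(Finset.mem_filter.mp ht).2]),
    Finset.sum_const, Nat.card_eq_fintype_card, Fintype.card_subtype, smul_eq_mul, mul_comm]
def extEquiv (k n : ℕ) (he : n % 2 = 0) (v : ℤ) (hv1 : 1 ≤ v) (hvk : v ≤ (k:ℤ)) :
    {a : Fin (n+4) → ℤ // Cond k (n+4) a ∧ a (Fin.last (n+3)) = v} ≃
    {x : {b : Fin (n+2) → ℤ // Cond k (n+2) b} × ℤ //
      1 ≤ x.2 ∧ x.2 ≤ x.1.1 ⟨n+1, by omega⟩ ∧ x.2 ≤ v} where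
  toFun a := by
    refine ⟨(⟨fun i => a.1 ⟨i.1, by omega⟩, ?_, ?_⟩, a.1 ⟨n+2, by omega⟩), ?_, ?_, ?_⟩
    · intro i; exact a.2.1.1 ⟨i.1, by omega⟩
    · intro i h; exact a.2.1.2 i (by omega)
    · exact (a.2.1.1 _).1
    · have h2 := a.2.1.2 (n+1) (by omega)
      rw [if_neg (by omega)] at h2
      exact h2
    · have h3 := a.2.1.2 (n+2) (by omega)
      rw [if_pos (by omega)] at h3
      exact le_of_le_of_eq h3 a.2.2
  invFun x := by
    refine ⟨fun i => if h : i.1 < n+2 then x.1.1.1 ⟨i.1, h⟩ else if i.1 = n+2 then x.1.2 else v,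
      ⟨?_, ?_⟩, ?_⟩
    · intro i; dsimp only; split_ifs with h h'
      · exact x.1.1.2.1 _
      · exact ⟨x.2.1, le_trans x.2.2.1 (x.1.1.2.1 _).2⟩
      · exact ⟨hv1, hvk⟩
    · intro i h; dsimp only
      by_cases h1 : i + 1 < n + 2
      · simp only [dif_pos (show i < n+2 by omega), dif_pos h1]
        exact x.1.1.2.2 i h1
      · by_cases h2 : i = n+1
        · subst h2
          rw [if_neg (by omega)]
          simp only [dif_pos (show n+1 < n+2 by omega), dif_neg (show ¬ (n+2 < n+2) by omega),
            if_pos rfl]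
          exact x.2.2.1
        · have h3 : i = n+2 := by omega
          subst h3
          rw [if_pos (by omega)]
          simp only [dif_neg (show ¬ (n+2 < n+2) by omega),
            dif_neg (show ¬ (n+3 < n+2) by omega), if_pos rfl, if_neg (show ¬ (n+3 = n+2) by omega)]
          exact x.2.2.2
    · simp only [Fin.val_last]
      rw [dif_neg (show ¬ (n+3 < n+2) by omega), if_neg (show ¬ (n+3 = n+2) by omega)]
  left_inv a := by
    apply Subtype.ext; funext i; dsimp only; split_ifs with h h'
    · exact congrArg a.1 (Fin.ext rfl)
    · have : i = (⟨n+2, by omega⟩ : Fin (n+4)) := Fin.ext h'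
      rw [this]
    · have : i = Fin.last (n+3) := Fin.ext (by simp [Fin.last]; omega)
      rw [this, a.2.2]
  right_inv x := by
    apply Subtype.ext
    refine Prod.ext ?_ ?_
    · apply Subtype.ext; funext i
      show (if h : i.1 < n+2 then _ else _) = _
      rw [dif_pos (show i.1 < n+2 from i.2)]
    · dsimp only
      rw [dif_neg (show ¬ (n+2 < n+2) by omega), if_pos rfl]


def baseEquiv (k : ℕ) (j : ℤ) (hj1 : 1 ≤ j) (hjk : j ≤ (k:ℤ)) :
    {a : Fin 2 → ℤ // Cond k 2 a ∧ a (Fin.last 1) = j} ≃ {u : ℤ // 1 ≤ u ∧ u ≤ j} where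
  toFun a := by
    refine ⟨a.1 0, (a.2.1.1 0).1, ?_⟩
    have h0 := a.2.1.2 0 (by omega)
    rw [if_pos rfl] at h0
    exact le_of_le_of_eq h0 a.2.2
  invFun u := by
    refine ⟨fun i => if i.1 = 0 then u.1 else j, ⟨?_, ?_⟩, ?_⟩
    · intro i; dsimp only; split_ifs with h
      · exact ⟨u.2.1, le_trans u.2.2 hjk⟩
      · exact ⟨hj1, hjk⟩
    · intro i h
      have : i = 0 := by omega
      subst this
      rw [if_pos (show 0 % 2 = 0 from rfl)]
      show (if (0:ℕ) = 0 then u.1 else j) ≤ (if (1:ℕ) = 0 then u.1 else j)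
      rw [if_pos rfl, if_neg (by omega)]
      exact u.2.2
    · show (if ((Fin.last 1).1 = 0) then u.1 else j) = j
      rw [if_neg (by simp [Fin.val_last])]
  left_inv a := by
    apply Subtype.ext; funext i; dsimp only; split_ifs with h
    · exact congrArg a.1 (Fin.ext h.symm)
    · have : i = Fin.last 1 := Fin.ext (by simp [Fin.val_last]; omega)
      rw [this, a.2.2]
  right_inv u := by
    apply Subtype.ext
    show (if ((0 : Fin 2).1 = 0) then u.1 else j) = u.1
    rw [if_pos (show ((0 : Fin 2).1 = 0) from rfl)]



noncomputable def g (k t : ℕ) (j : ℤ) : ℕ :=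
  Nat.card {a : Fin (2*t+2) → ℤ // Cond k (2*t+2) a ∧ a (Fin.last (2*t+1)) = j}

lemma g_zero (k t : ℕ) : g k t 0 = 0 := by
  have : IsEmpty {a : Fin (2*t+2) → ℤ // Cond k (2*t+2) a ∧ a (Fin.last (2*t+1)) = (0:ℤ)} := by
    constructor
    rintro ⟨a, ha, hl⟩
    have := (ha.1 (Fin.last (2*t+1))).1
    omega
  exact Nat.card_of_isEmpty

lemma F3 (k : ℕ) (j : ℤ) (hj1 : 1 ≤ j) (hjk : j ≤ (k:ℤ)) : g k 0 j = j.toNat := by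
  rw [g, Nat.card_congr (baseEquiv k j hj1 hjk), cardIcc]

lemma last_mem (k n : ℕ) (a : {a : Fin (n+2) → ℤ // Cond k (n+2) a}) :
    a.1 (Fin.last (n+1)) ∈ Finset.Icc (1:ℤ) k := by
  rw [Finset.mem_Icc]; exact a.2.1 _

lemma F2 (k t : ℕ) :
    Nat.card {a : Fin (2*t+2) → ℤ // Cond k (2*t+2) a} = ∑ j ∈ Finset.Icc (1:ℤ) k, g k t j := by
  classical
  set T := {a : Fin (2*t+2) → ℤ // Cond k (2*t+2) a}
  haveI : Fintype T := Fintype.ofFinite T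
  have h := sum_card_fibers (T := T) (fun a => a.1 (Fin.last (2*t+1))) (Finset.Icc (1:ℤ) k)
    (last_mem k (2*t) ) (fun _ => 1)
  simp only [one_mul] at h
  rw [Nat.card_eq_fintype_card]
  calc Fintype.card T = ∑ _a : T, 1 := by
        rw [Finset.sum_const, smul_eq_mul, mul_one, Finset.card_univ]
    _ = ∑ j ∈ Finset.Icc (1:ℤ) k, Nat.card {a : T // a.1 (Fin.last (2*t+1)) = j} := h
    _ = ∑ j ∈ Finset.Icc (1:ℤ) k, g k t j := by
        refine Finset.sum_congr rfl fun j _ => ?_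
        rw [g]
        exact Nat.card_congr (Equiv.subtypeSubtypeEquivSubtypeInter (Cond k (2*t+2))
          (fun a => a (Fin.last (2*t+1)) = j))

lemma F4 (k t : ℕ) (v : ℤ) (hv1 : 1 ≤ v) (hvk : v ≤ (k:ℤ)) :
    g k (t+1) v = ∑ j ∈ Finset.Icc (1:ℤ) k, (min j v).toNat * g k t j := by
  classical
  set T := {a : Fin (2*t+2) → ℤ // Cond k (2*t+2) a} with hT
  haveI : Fintype T := Fintype.ofFinite T
  have e1 := extEquiv k (2*t) (by omega) v hv1 hvk
  have e2 := Equiv.subtypeProdEquivSigmaSubtype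
    (fun (a : T) (b : ℤ) => 1 ≤ b ∧ b ≤ a.1 (Fin.last (2*t+1)) ∧ b ≤ v)
  haveI inst3 : ∀ a : T, Fintype {b : ℤ // 1 ≤ b ∧ b ≤ a.1 (Fin.last (2*t+1)) ∧ b ≤ v} := by
    intro a
    have hfin : (Set.Icc (1:ℤ) (a.1 (Fin.last (2*t+1)))).Finite := Set.finite_Icc _ _
    haveI := hfin.to_subtype
    have : Finite {b : ℤ // 1 ≤ b ∧ b ≤ a.1 (Fin.last (2*t+1)) ∧ b ≤ v} := by
      refine Finite.of_injective
        (fun b => (⟨b.1, b.2.1, b.2.2.1⟩ : Set.Icc (1:ℤ) (a.1 (Fin.last (2*t+1))))) ?_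
      intro b c h
      apply Subtype.ext
      simpa [Subtype.ext_iff] using h
    exact Fintype.ofFinite _
  have step1 : g k (t+1) v
      = Nat.card ((a : T) × {b : ℤ // 1 ≤ b ∧ b ≤ a.1 (Fin.last (2*t+1)) ∧ b ≤ v}) := by
    rw [g]
    exact Nat.card_congr (e1.trans e2)
  rw [step1, Nat.card_eq_fintype_card, Fintype.card_sigma]
  have step2 : ∀ a : T, Fintype.card {b : ℤ // 1 ≤ b ∧ b ≤ a.1 (Fin.last (2*t+1)) ∧ b ≤ v}
      = (fun j => (min j v).toNat) ((fun (a : T) => a.1 (Fin.last (2*t+1))) a) := by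
    intro a
    rw [← Nat.card_eq_fintype_card, cardIcc2]
  rw [Finset.sum_congr rfl fun a _ => step2 a,
    sum_card_fibers (fun (a : T) => a.1 (Fin.last (2*t+1))) (Finset.Icc (1:ℤ) k)
      (last_mem k (2*t)) (fun j => (min j v).toNat)]
  refine Finset.sum_congr rfl fun j _ => ?_
  congr 1
  rw [g]
  exact Nat.card_congr (Equiv.subtypeSubtypeEquivSubtypeInter (Cond k (2*t+2))
    (fun a => a (Fin.last (2*t+1)) = j))


noncomputable def wc (k : ℕ) (m : ℤ) : ℕ → ℚ
  | 0 => 0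
  | 1 => 0
  | (n+2) => if n % 2 = 0 then (g k (n/2) m : ℚ) else 0

noncomputable def W (k : ℕ) (m : ℤ) : PowerSeries ℚ := PowerSeries.mk (wc k m)

noncomputable def S (k : ℕ) : PowerSeries ℚ := 1 + ∑ j ∈ Finset.Icc (1:ℤ) k, W k j

lemma W_zero (k : ℕ) : W k 0 = 0 := by
  apply PowerSeries.ext; intro n
  rcases n with _|(_|n) <;> simp [W, wc, g_zero]

lemma wc_odd (k : ℕ) (m : ℤ) (n : ℕ) (h : n % 2 = 1) : wc k m n = 0 := by
  rcases n with _|(_|n)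
  · simp at h
  · simp [wc]
  · rw [wc, if_neg (by omega)]

open PowerSeries in
lemma R1 (k : ℕ) (m : ℤ) (hm : m ∈ Finset.Icc (1:ℤ) k) :
    W k m = PowerSeries.C (m:ℚ) * X^2
      + X^2 * ∑ j ∈ Finset.Icc (1:ℤ) k, PowerSeries.C ((min j m).toNat : ℚ) * W k j := by
  rw [Finset.mem_Icc] at hm
  apply PowerSeries.ext; intro n
  rw [map_add, coeff_C_mul, coeff_X_pow, coeff_X_pow_mul', map_sum]
  simp only [coeff_C_mul, W, coeff_mk]
  rcases n with _|(_|n)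
  · simp [wc]
  · simp [wc]
  · rw [if_pos (by omega : 2 ≤ n + 2)]
    have hn2 : n + 2 - 2 = n := by omega
    rw [hn2]
    rcases Nat.even_or_odd n with he | ho
    · rcases he with ⟨t, ht⟩
      rcases Nat.eq_zero_or_pos t with ht0 | htpos
      · subst ht; subst ht0
        rw [wc, if_pos (by omega), if_pos (by omega), show (0+0)/2 = 0 by omega,
          F3 k m hm.1 hm.2]
        have hz : ∀ j ∈ Finset.Icc (1:ℤ) k, ((min j m).toNat:ℚ) * wc k j (0+0) = 0 := by
          intro j _; simp [wc]
        rw [Finset.sum_congr rfl hz, Finset.sum_const_zero, mul_one, add_zero]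
        exact_mod_cast Int.toNat_of_nonneg (show (0:ℤ) ≤ m by omega)
      · obtain ⟨s, hs⟩ : ∃ s, t = s + 1 := ⟨t - 1, by omega⟩
        subst hs; subst ht
        rw [wc, if_pos (by omega), if_neg (by omega)]
        have hdiv : (s + 1 + (s + 1)) / 2 = s + 1 := by omega
        rw [hdiv, mul_zero, zero_add]
        have hwc : ∀ j ∈ Finset.Icc (1:ℤ) k,
            ((min j m).toNat : ℚ) * wc k j (s + 1 + (s + 1)) = ((min j m).toNat : ℚ) * (g k s j : ℚ) := by
          intro j _
          congr 1
          rw [show s + 1 + (s + 1) = (2*s) + 2 by omega, wc, if_pos (by omega)]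
          congr 2
          omega
        rw [Finset.sum_congr rfl hwc, F4 k s m hm.1 hm.2]
        push_cast
        rfl
    · obtain ⟨u, hu⟩ := ho
      subst hu
      rw [wc, if_neg (by omega), if_neg (by omega)]
      have hz : ∀ j ∈ Finset.Icc (1:ℤ) k,
          ((min j m).toNat : ℚ) * wc k j (2*u+1) = 0 := by
        intro j _
        rw [wc_odd k j (2*u+1) (by omega), mul_zero]
      rw [Finset.sum_congr rfl hz, Finset.sum_const_zero]
      ring

lemma Icc_split (a b : ℤ) (hab : a ≤ b) (F : ℤ → PowerSeries ℚ) :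
    ∑ j ∈ Finset.Icc a b, F j = F a + ∑ j ∈ Finset.Icc (a+1) b, F j := by
  rw [show Finset.Icc a b = insert a (Finset.Icc (a+1) b) by
      ext x; simp only [Finset.mem_Icc, Finset.mem_insert]; omega,
    Finset.sum_insert (by simp only [Finset.mem_Icc]; omega)]

open PowerSeries in
lemma W_diff (k : ℕ) (m : ℤ) (h1 : 1 ≤ m) (hmk : m ≤ (k:ℤ)) :
    W k m - W k (m-1) = X^2 + X^2 * ∑ j ∈ Finset.Icc m (k:ℤ), W k j := by
  by_cases hm1 : m = 1
  · subst hm1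
    rw [show (1:ℤ) - 1 = 0 by ring, W_zero, sub_zero, R1 k 1 (by simp; omega)]
    have h2 : ∀ j ∈ Finset.Icc (1:ℤ) k, PowerSeries.C ((min j 1).toNat : ℚ) * W k j = W k j := by
      intro j hj
      rw [Finset.mem_Icc] at hj
      rw [show min j 1 = 1 by omega]
      norm_num
    rw [Finset.sum_congr rfl h2]
    norm_num
  · have h2 : 2 ≤ m := by omega
    rw [R1 k m (by simp; omega), R1 k (m-1) (by simp; omega)]
    have key : ∀ j ∈ Finset.Icc (1:ℤ) k,
        PowerSeries.C ((min j m).toNat : ℚ) * W k j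
          - PowerSeries.C ((min j (m-1)).toNat : ℚ) * W k j
        = (if m ≤ j then W k j else 0) := by
      intro j hj
      rw [Finset.mem_Icc] at hj
      by_cases hle : m ≤ j
      · rw [if_pos hle, show min j m = m by omega, show min j (m-1) = m - 1 by omega]
        rw [← sub_mul, ← map_sub]
        have : ((m.toNat : ℚ) - ((m-1).toNat : ℚ)) = 1 := by
          rw [show ((m.toNat:ℚ)) = (m:ℚ) from by
                exact_mod_cast Int.toNat_of_nonneg (show (0:ℤ) ≤ m by omega),
            show (((m-1).toNat:ℚ)) = ((m:ℚ)-1) from by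
                have hc : (((m-1).toNat:ℚ)) = ((m-1:ℤ):ℚ) := by
                  exact_mod_cast Int.toNat_of_nonneg (show (0:ℤ) ≤ m-1 by omega)
                rw [hc]; push_cast; ring]
          ring
        rw [this, map_one, one_mul]
      · rw [if_neg hle, show min j m = j by omega, show min j (m-1) = j by omega, sub_self]
    have sum_eq : ∑ j ∈ Finset.Icc (1:ℤ) k, (if m ≤ j then W k j else 0)
        = ∑ j ∈ Finset.Icc m (k:ℤ), W k j := by
      rw [← Finset.sum_filter]
      congr 1
      ext x; simp only [Finset.mem_filter, Finset.mem_Icc]; omega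
    calc PowerSeries.C (m:ℚ) * X^2 + X^2 * ∑ j ∈ Finset.Icc (1:ℤ) k, PowerSeries.C ((min j m).toNat:ℚ) * W k j
        - (PowerSeries.C ((m-1:ℤ):ℚ) * X^2 + X^2 * ∑ j ∈ Finset.Icc (1:ℤ) k, PowerSeries.C ((min j (m-1)).toNat:ℚ) * W k j)
        = (PowerSeries.C (m:ℚ) - PowerSeries.C ((m-1:ℤ):ℚ)) * X^2
          + X^2 * ∑ j ∈ Finset.Icc (1:ℤ) k,
            (PowerSeries.C ((min j m).toNat:ℚ) * W k j - PowerSeries.C ((min j (m-1)).toNat:ℚ) * W k j) := by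
          rw [Finset.sum_sub_distrib]; ring
      _ = X^2 + X^2 * ∑ j ∈ Finset.Icc m (k:ℤ), W k j := by
          rw [Finset.sum_congr rfl key, sum_eq, ← map_sub]
          push_cast
          rw [show (m:ℚ) - ((m:ℚ) - 1) = 1 by ring, map_one, one_mul]


noncomputable def FG : ℕ → Polynomial ℚ × Polynomial ℚ
  | 0 => (0, 1)
  | (m+1) => ((FG m).1 + ((FG m).2 - Polynomial.X^2 * (FG m).1),
              (FG m).2 - Polynomial.X^2 * (FG m).1)

lemma FG_snd_rec (m : ℕ) :
    (FG (m+2)).2 = (2 - Polynomial.X^2) * (FG (m+1)).2 - (FG m).2 := by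
  have h1 : (FG (m+1)).1 = (FG m).1 + ((FG m).2 - Polynomial.X^2 * (FG m).1) := rfl
  have h2 : (FG (m+1)).2 = (FG m).2 - Polynomial.X^2 * (FG m).1 := rfl
  have h3 : (FG (m+2)).2 = (FG (m+1)).2 - Polynomial.X^2 * (FG (m+1)).1 := rfl
  rw [h3, h1, h2]
  ring

lemma FG1 : FG 1 = (1, 1) := by
  show ((0:Polynomial ℚ) + ((1:Polynomial ℚ) - Polynomial.X^2 * 0),
    (1:Polynomial ℚ) - Polynomial.X^2 * 0) = (1, 1)
  norm_num

open PowerSeries in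
lemma Ind (k : ℕ) (hk : 1 ≤ k) : ∀ m : ℕ, 1 ≤ m → (m:ℤ) ≤ (k:ℤ) →
    W k m = ((FG m).1 : PowerSeries ℚ) * (X^2 * S k) ∧
    W k m - W k ((m:ℤ)-1) = ((FG m).2 : PowerSeries ℚ) * (X^2 * S k) := by
  intro m
  induction m with
  | zero => intro h; omega
  | succ m ih =>
    intro _ hmk
    by_cases hm : m = 0
    · subst hm
      have hd := W_diff k 1 le_rfl (by exact_mod_cast hk)
      rw [show (1:ℤ) - 1 = 0 by ring, W_zero, sub_zero] at hd
      have hW1 : W k 1 = X^2 * S k := by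
        rw [hd, S, mul_add, mul_one]
      constructor
      · rw [show (FG 1).1 = 1 by rw [FG1], Polynomial.coe_one, one_mul]
        push_cast
        exact hW1
      · rw [show (FG 1).2 = 1 by rw [FG1], Polynomial.coe_one, one_mul]
        push_cast
        rw [W_zero, sub_zero]
        exact hW1
    · have h1 : 1 ≤ m := by omega
      have hmk' : (m:ℤ) ≤ (k:ℤ) := by push_cast at hmk ⊢; omega
      obtain ⟨ih1, ih2⟩ := ih h1 hmk'
      have hdm1 := W_diff k ((m:ℤ) + 1) (by omega) (by push_cast at hmk ⊢; omega)
      rw [show ((m:ℤ)+1) - 1 = (m:ℤ) by ring] at hdm1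
      have hdm := W_diff k (m:ℤ) (by exact_mod_cast h1) hmk'
      have hsplit := Icc_split (m:ℤ) (k:ℤ) hmk' (W k)
      have hD : W k ((m:ℤ)+1) - W k (m:ℤ)
          = (W k (m:ℤ) - W k ((m:ℤ)-1)) - X^2 * W k (m:ℤ) := by
        rw [hdm1, hdm, hsplit]; ring
      have hD2 : W k ((m:ℤ)+1) - W k (m:ℤ) = ((FG (m+1)).2 : PowerSeries ℚ) * (X^2 * S k) := by
        rw [hD, ih2, ih1,
          show (FG (m+1)).2 = (FG m).2 - Polynomial.X^2 * (FG m).1 from rfl,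
          Polynomial.coe_sub, Polynomial.coe_mul, Polynomial.coe_pow, Polynomial.coe_X]
        ring
      constructor
      · have : W k ((m:ℤ)+1) = W k (m:ℤ) + ((FG (m+1)).2 : PowerSeries ℚ) * (X^2 * S k) := by
          rw [← hD2]; ring
        push_cast
        rw [this, ih1,
          show (FG (m+1)).1 = (FG m).1 + ((FG m).2 - Polynomial.X^2 * (FG m).1) from rfl,
          show ((FG m).2 - Polynomial.X^2 * (FG m).1) = (FG (m+1)).2 from rfl,
          Polynomial.coe_add]
        ring
      · push_cast
        rw [show ((m:ℤ)+1) - 1 = (m:ℤ) by ring]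
        exact hD2

open PowerSeries in
lemma key (k : ℕ) (hk : 1 ≤ k) : ((FG (k+1)).2 : PowerSeries ℚ) * S k = 1 := by
  obtain ⟨h1, h2⟩ := Ind k hk k hk le_rfl
  have hb := W_diff k (k:ℤ) (by exact_mod_cast hk) le_rfl
  rw [Finset.Icc_self, Finset.sum_singleton] at hb
  rw [h2, h1] at hb
  -- hb : (FG k).2 * (X²S) = X² + X² * ((FG k).1 * (X²S))
  have hX2 : (X^2 : PowerSeries ℚ) ≠ 0 := pow_ne_zero 2 X_ne_zero
  have hmain : (X^2 : PowerSeries ℚ) * (((FG (k+1)).2 : PowerSeries ℚ) * S k) = X^2 * 1 := by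
    rw [show (FG (k+1)).2 = (FG k).2 - Polynomial.X^2 * (FG k).1 from rfl,
      Polynomial.coe_sub, Polynomial.coe_mul, Polynomial.coe_pow, Polynomial.coe_X]
    rw [mul_one]
    calc (X^2 : PowerSeries ℚ) * ((((FG k).2 : PowerSeries ℚ) - X^2 * ((FG k).1 : PowerSeries ℚ)) * S k)
        = ((FG k).2 : PowerSeries ℚ) * (X^2 * S k) - X^2 * (((FG k).1 : PowerSeries ℚ) * (X^2 * S k)) := by ring
      _ = X^2 := by rw [hb]; ring
  exact mul_left_cancel₀ hX2 hmain

lemma U2_zero : U2 0 = 1 := by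
  rw [U2, Polynomial.Chebyshev.U_zero, Polynomial.one_comp]

lemma U2_one : U2 1 = Polynomial.X := by
  rw [U2, Polynomial.Chebyshev.U_one, Polynomial.mul_comp, Polynomial.X_comp,
    show ((2:Polynomial ℚ).comp (Polynomial.C (1/2) * Polynomial.X)) = 2 from by
      simp, ← mul_assoc]
  rw [show (2 : Polynomial ℚ) * Polynomial.C (1/2) = 1 from by
    rw [← map_ofNat (Polynomial.C : ℚ →+* Polynomial ℚ) 2, ← Polynomial.C_mul]
    norm_num]
  rw [one_mul]

lemma U2_rec (n : ℤ) : U2 (n+2) = Polynomial.X * U2 (n+1) - U2 n := by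
  rw [U2, Polynomial.Chebyshev.U_add_two, Polynomial.sub_comp, Polynomial.mul_comp,
    Polynomial.mul_comp, Polynomial.X_comp]
  rw [show ((2:Polynomial ℚ).comp (Polynomial.C (1/2) * Polynomial.X)) = 2 from by simp]
  rw [show (2 : Polynomial ℚ) * (Polynomial.C (1/2) * Polynomial.X) = Polynomial.X from by
    rw [← mul_assoc, ← map_ofNat (Polynomial.C : ℚ →+* Polynomial ℚ) 2, ← Polynomial.C_mul]
    norm_num]
  rfl

lemma U2_rec4 (n : ℤ) : U2 (n+4) = (Polynomial.X^2 - 2) * U2 (n+2) - U2 n := by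
  have a := U2_rec (n+2)
  have b := U2_rec (n+1)
  have c := U2_rec n
  rw [show (n+2)+2 = n+4 by ring, show (n+2)+1 = n+3 by ring] at a
  rw [show (n+1)+2 = n+3 by ring, show (n+1)+1 = n+2 by ring] at b
  rw [a, b, c]
  ring

lemma FG_eq_U2 : ∀ m : ℕ, (FG (m+1)).2 = (-1)^m * U2 (2*(m:ℤ)) := by
  have base0 : (FG 1).2 = (-1)^0 * U2 (2*((0:ℕ):ℤ)) := by
    rw [show (2*((0:ℕ):ℤ)) = 0 by norm_num, U2_zero, FG1]
    norm_num
  have base1 : (FG 2).2 = (-1)^1 * U2 (2*((1:ℕ):ℤ)) := by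
    have hU22 : U2 2 = Polynomial.X^2 - 1 := by
      rw [show (2:ℤ) = 0+2 by ring, U2_rec, zero_add, U2_one, U2_zero]
      ring
    rw [show (2*((1:ℕ):ℤ)) = 2 by norm_num, hU22,
      show (FG 2).2 = (FG 1).2 - Polynomial.X^2 * (FG 1).1 from rfl, FG1]
    ring
  intro m
  induction m using Nat.twoStepInduction with
  | zero => exact base0
  | one => exact base1
  | more m ihm ihm1 =>
    rw [FG_snd_rec (m+1), ihm1, ihm]
    have := U2_rec4 (2*(m:ℤ))
    rw [show 2*(m:ℤ)+4 = 2*(((m+2:ℕ)):ℤ) by push_cast; ring,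
      show 2*(m:ℤ)+2 = 2*(((m+1:ℕ)):ℤ) by push_cast; ring] at this
    rw [this]
    ring


open PowerSeries in
lemma F_eq (k : ℕ) :
    (PowerSeries.mk fun n => if n % 2 = 1 then (altCount k (n - 1) : ℚ) else 0)
      = X * S k := by
  apply PowerSeries.ext; intro n
  rw [coeff_mk]
  rcases n with _|n
  · rw [if_neg (by omega)]
    simp [PowerSeries.coeff_zero_eq_constantCoeff]
  · rw [PowerSeries.coeff_succ_X_mul, S, map_add, map_sum, PowerSeries.coeff_one]
    simp only [W, coeff_mk]
    rcases Nat.eq_zero_or_pos n with h0 | hpos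
    · subst h0
      rw [if_pos (show (0+1)%2 = 1 from rfl), if_pos (show (0:ℕ) = 0 from rfl)]
      have h1 : altCount k (1-1) = 1 := F1 k
      rw [h1]
      have hz : ∀ j ∈ Finset.Icc (1:ℤ) k, wc k j 0 = 0 := fun j _ => by simp [wc]
      rw [Finset.sum_congr rfl hz, Finset.sum_const_zero, add_zero]
      norm_num
    · rcases Nat.even_or_odd n with ⟨t, ht⟩ | ⟨t, ht⟩
      · obtain ⟨s, hs⟩ : ∃ s, t = s+1 := ⟨t-1, by omega⟩
        subst hs; subst ht
        rw [if_pos (show (s+1+(s+1)+1)%2 = 1 by omega),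
          if_neg (show ¬(s+1+(s+1) = 0) by omega)]
        have h2 : altCount k (s+1+(s+1) + 1 - 1) = ∑ j ∈ Finset.Icc (1:ℤ) k, g k s j := by
          rw [show s+1+(s+1)+1-1 = 2*s+2 by omega]
          exact F2 k s
        have hsum : ∀ j ∈ Finset.Icc (1:ℤ) k, wc k j (s+1+(s+1)) = ((g k s j : ℚ)) := by
          intro j _
          rw [show s+1+(s+1) = (2*s)+2 by omega, wc, if_pos (by omega),
            show (2*s)/2 = s by omega]
        rw [Finset.sum_congr rfl hsum, h2, zero_add]
        push_cast
        rfl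
      · subst ht
        rw [if_neg (show ¬((2*t+1+1)%2 = 1) by omega), if_neg (show ¬(2*t+1 = 0) by omega),
          zero_add,
          Finset.sum_congr rfl (fun j _ => wc_odd k j (2*t+1) (by omega)),
          Finset.sum_const_zero]

end S4

theorem statement4 (k : ℕ) (hk : 1 ≤ k) :
    (U2 (2 * k) : PowerSeries ℚ) *
        (PowerSeries.mk fun n => if n % 2 = 1 then (altCount k (n - 1) : ℚ) else 0)
      = (-1) ^ k * PowerSeries.X := by
  rw [S4.F_eq k]
  have hkey := S4.key k hk
  have hU2 : U2 (2*(k:ℤ)) = (-1)^k * (S4.FG (k+1)).2 := by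
    rw [S4.FG_eq_U2 k, ← mul_assoc, ← mul_pow]
    norm_num
  rw [hU2, Polynomial.coe_mul, Polynomial.coe_pow,
    show ((-1 : Polynomial ℚ) : PowerSeries ℚ) = -1 from by
      rw [show (-1 : Polynomial ℚ) = -(1:Polynomial ℚ) from rfl]
      simp]
  calc (-1:PowerSeries ℚ)^k * ((S4.FG (k+1)).2 : PowerSeries ℚ) * (PowerSeries.X * S4.S k)
      = (-1)^k * PowerSeries.X * (((S4.FG (k+1)).2 : PowerSeries ℚ) * S4.S k) := by ring
    _ = (-1)^k * PowerSeries.X := by rw [hkey, mul_one]
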